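/- Characterization of the theorems of WF_[→]^-: a formula C is a theorem of the system WF_[→]^- (axiom A→A together with the rules modus ponens, a fortiori and transitivity, but without the equivalence rule) if and only if C is of the form Ā_n→(A→A) for some n≥0, formulas A₁,…,A_n, and some formula A. -/
import Mathlib


/-- Implicational formulas: built from propositional variables using only `→`. -/
inductive Fm : Type
  | var : ℕ → Fm
  | imp : Fm → Fm → Fm

/-- `chain [A₁,…,Aₙ] E` is the formula `A₁→(A₂→(⋯→(Aₙ→E)⋯))` (and `E` when n = 0). -/
def chain : List Fm → Fm → Fm
  | [], E => E
  | A :: L, E => Fm.imp A (chain L E)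

/-- Theorems of the Hilbert system `WF_[→]⁻`: `WF_[→]` without the equivalence rule. -/
inductive WFmThm : Fm → Prop
  | id (A : Fm) : WFmThm (A.imp A)
  | mp {A B : Fm} : WFmThm A → WFmThm (A.imp B) → WFmThm B
  | afort {A : Fm} (B : Fm) : WFmThm A → WFmThm (B.imp A)
  | trans {A B C : Fm} : WFmThm (A.imp B) → WFmThm (B.imp C) → WFmThm (A.imp C)

/-- The theorems of `WF_[→]⁻` are exactly the formulas of the form `Ā_n → (A → A)`. -/
theorem WFminus_characterization (C : Fm) :
    WFmThm C ↔ ∃ (L : List Fm) (A : Fm), C = chain L (A.imp A) := by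
  constructor
  · intro h
    induction h with
    | id A => exact ⟨[], A, rfl⟩
    | mp _ _ ihA ihAB =>
      obtain ⟨L, X, hL⟩ := ihAB
      cases L with
      | nil =>
        simp only [chain] at hL
        injection hL with hAX hBX
        subst hBX; subst hAX
        exact ihA
      | cons D L' =>
        cases hL
        exact ⟨L', X, rfl⟩
    | afort B _ ih =>
      obtain ⟨L, X, hL⟩ := ih
      exact ⟨B :: L, X, by simp [chain, hL]⟩
    | trans _ _ ih1 ih2 =>
      obtain ⟨L2, X2, h2⟩ := ih2
      cases L2 with
      | nil =>
        cases h2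
        obtain ⟨L1, X1, h1⟩ := ih1
        exact ⟨L1, X1, h1⟩
      | cons D L2' =>
        cases h2
        exact ⟨_ :: L2', X2, rfl⟩
  · rintro ⟨L, A, rfl⟩
    induction L with
    | nil => exact WFmThm.id A
    | cons B L ih => exact WFmThm.afort B ih
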